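/- arXiv:2111.10393 — 2 statements merged into one kernel-verified Lean document; each statement's English description precedes it below -/
import Mathlib

section
/- Let k ≥ 2 and r ≥ 2 be integers, let H be a k-bounded hypergraph, and let G = K_r be the complete graph on r vertices (viewed as a 2-uniform hypergraph), with V(G) disjoint from V(H). Then G ⋉ H is a (k+1)-bounded hypergraph, ν(G ⋉ H) ≤ r, and G ⋉ H is r-colorable if and only if H is r-colorable. -/
open Finset

/-- `(V, E)` is a hypergraph: every edge is a nonempty subset of `V`. -/
def IsHypergraph {α : Type*} (V : Finset α) (E : Finset (Finset α)) : Prop :=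
  ∀ e ∈ E, e ⊆ V ∧ e.Nonempty

/-- A matching: a set of pairwise disjoint edges. -/
def IsMatching {α : Type*} (M : Finset (Finset α)) : Prop :=
  ∀ e ∈ M, ∀ f ∈ M, e ≠ f → Disjoint e f

/-- `ν(G) ≤ s`: every matching consisting of edges of `E` has at most `s` edges. -/
def MatchNumLE {α : Type*} (E : Finset (Finset α)) (s : ℕ) : Prop :=
  ∀ M ⊆ E, IsMatching M → M.card ≤ s

/-- An edge `e` is monochromatic under the coloring `c`. -/
def Mono {α : Type*} (e : Finset α) {r : ℕ} (c : α → Fin r) : Prop :=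
  ∃ i, ∀ v ∈ e, c v = i

/-- `c` is a proper coloring of the hypergraph with edge set `E`:
no edge is monochromatic. -/
def IsColoring {α : Type*} (E : Finset (Finset α)) {r : ℕ} (c : α → Fin r) : Prop :=
  ∀ e ∈ E, ¬ Mono e c

/-- The hypergraph with edge set `E` is `r`-colorable. -/
def HColorable {α : Type*} (E : Finset (Finset α)) (r : ℕ) : Prop :=
  ∃ c : α → Fin r, IsColoring E c

/-- The edge set of `G ⋉ H`: the edges of `G` together with all sets `e ∪ {x}`
for `e` an edge of `H` and `x` a vertex of `G`. -/
def ltimesEdges {α : Type*} [DecidableEq α] (VG : Finset α)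
    (EG EH : Finset (Finset α)) : Finset (Finset α) :=
  EG ∪ (EH ×ˢ VG).image (fun p => insert p.2 p.1)

/-!
Every edge of `K_r ⋉ H` contains a vertex of `K_r`, so a matching picks disjoint sets of
vertices of `K_r` and has at most `r` edges. A proper `r`-colouring of `K_r ⋉ H` is injective,
hence bijective, on the `r` vertices of `K_r`; an `H`-edge monochromatic in colour `i` would
then extend by the vertex of colour `i` to a monochromatic edge of `K_r ⋉ H`. Conversely, an
`r`-colouring of `H` becomes one of `K_r ⋉ H` after recolouring `V(K_r)` bijectively, since
`V(H)` is untouched and `e ∪ {x}` is not monochromatic when `e` is not.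
-/

section

variable {α β : Type*}

theorem mem_ltimesEdges [DecidableEq α] {VG : Finset α} {EG EH : Finset (Finset α)}
    {e : Finset α} :
    e ∈ ltimesEdges VG EG EH ↔ e ∈ EG ∨ ∃ f ∈ EH, ∃ x ∈ VG, insert x f = e := by
  simp [ltimesEdges, and_assoc]

theorem card_le_of_mem_ltimesEdges [DecidableEq α] {VG : Finset α} {EG EH : Finset (Finset α)}
    {k : ℕ} (hG : ∀ e ∈ EG, e.card ≤ k + 1) (hH : ∀ f ∈ EH, f.card ≤ k) :
    ∀ e ∈ ltimesEdges VG EG EH, e.card ≤ k + 1 := by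
  intro e he
  rcases mem_ltimesEdges.mp he with he | ⟨f, hf, x, -, rfl⟩
  · exact hG e he
  · exact (card_insert_le x f).trans (Nat.succ_le_succ (hH f hf))

theorem inter_nonempty_of_mem_ltimesEdges [DecidableEq α] {VG : Finset α}
    {EG EH : Finset (Finset α)} (hG : ∀ e ∈ EG, (e ∩ VG).Nonempty) :
    ∀ e ∈ ltimesEdges VG EG EH, (e ∩ VG).Nonempty := by
  intro e he
  rcases mem_ltimesEdges.mp he with he | ⟨f, -, x, hx, rfl⟩
  · exact hG e he
  · exact ⟨x, mem_inter.mpr ⟨mem_insert_self x f, hx⟩⟩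

theorem matchNumLE_card_of_forall_inter_nonempty [DecidableEq α] {E : Finset (Finset α)}
    {S : Finset α} (hS : ∀ e ∈ E, (e ∩ S).Nonempty) : MatchNumLE E S.card := by
  intro M hME hM
  have hdisj : (M : Set (Finset α)).PairwiseDisjoint (· ∩ S) := fun e he f hf hne =>
    (hM e he f hf hne).mono inter_subset_left inter_subset_left
  calc M.card ≤ (M.biUnion (· ∩ S)).card :=
        card_le_card_biUnion hdisj fun e he => hS e (hME he)
    _ ≤ S.card := card_le_card (biUnion_subset.mpr fun _ _ => inter_subset_right)

section Coloring

variable {r : ℕ} {c c' : α → Fin r}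

theorem IsColoring.mono {E E' : Finset (Finset α)} (hc : IsColoring E c) (h : E' ⊆ E) :
    IsColoring E' c :=
  fun e he => hc e (h he)

theorem isColoring_congr {E : Finset (Finset α)} (h : ∀ e ∈ E, Set.EqOn c c' e) :
    IsColoring E c ↔ IsColoring E c' := by
  have mono_congr : ∀ e ∈ E, Mono e c ↔ Mono e c' := fun e he =>
    exists_congr fun i => forall₂_congr fun v hv => by rw [h e he hv]
  exact forall₂_congr fun e he => not_congr (mono_congr e he)

theorem isColoring_powersetCard_two_iff_injOn {V : Finset α} :
    IsColoring (V.powersetCard 2) c ↔ Set.InjOn c V := by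
  classical
  constructor
  · intro hc x hx y hy hxy
    by_contra hne
    refine hc {x, y} (mem_powersetCard.mpr ⟨?_, card_pair hne⟩) ⟨c x, ?_⟩
    · simpa [insert_subset_iff] using ⟨hx, hy⟩
    · simp [hxy]
  · rintro hinj e he ⟨i, hi⟩
    obtain ⟨hsub, he2⟩ := mem_powersetCard.mp he
    obtain ⟨x, y, hne, rfl⟩ := card_eq_two.mp he2
    have hx : x ∈ ({x, y} : Finset α) := mem_insert_self x {y}
    have hy : y ∈ ({x, y} : Finset α) := mem_insert_of_mem (mem_singleton_self y)
    exact hne (hinj (hsub hx) (hsub hy) ((hi x hx).trans (hi y hy).symm))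

theorem IsColoring.ltimes [DecidableEq α] {VG : Finset α} {EG EH : Finset (Finset α)}
    (hG : IsColoring EG c) (hH : IsColoring EH c) : IsColoring (ltimesEdges VG EG EH) c := by
  intro e he ⟨i, hi⟩
  rcases mem_ltimesEdges.mp he with he | ⟨f, hf, x, -, rfl⟩
  · exact hG e he ⟨i, hi⟩
  · exact hH f hf ⟨i, fun v hv => hi v (mem_insert_of_mem hv)⟩

theorem IsColoring.of_ltimes [DecidableEq α] {VG : Finset α} {EG EH : Finset (Finset α)}
    (hc : IsColoring (ltimesEdges VG EG EH) c) (hsurj : ∀ i, ∃ x ∈ VG, c x = i) :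
    IsColoring EH c := by
  intro f hf ⟨i, hi⟩
  obtain ⟨x, hx, rfl⟩ := hsurj i
  refine hc (insert x f) (mem_ltimesEdges.mpr (.inr ⟨f, hf, x, hx, rfl⟩)) ⟨c x, ?_⟩
  simpa [forall_mem_insert] using hi

end Coloring

theorem Set.InjOn.surjOn_of_card_eq [Fintype β] {c : α → β} {V : Finset α}
    (hc : Set.InjOn c V) (hV : V.card = Fintype.card β) : ∀ b, ∃ x ∈ V, c x = b := by
  classical
  have himage : V.image c = Finset.univ := eq_univ_of_card _ ((card_image_of_injOn hc).trans hV)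
  intro b
  simpa using (himage.symm ▸ Finset.mem_univ b : b ∈ V.image c)

theorem exists_injOn_eqOn_compl [Fintype β] (g : α → β) {V : Finset α}
    (hV : V.card ≤ Fintype.card β) : ∃ c : α → β, Set.InjOn c V ∧ Set.EqOn c g (↑V)ᶜ := by
  classical
  obtain ⟨emb⟩ := Function.Embedding.nonempty_of_card_le (by simpa using hV : Fintype.card V ≤ _)
  refine ⟨fun v => if h : v ∈ V then emb ⟨v, h⟩ else g v, ?_, ?_⟩
  · intro x hx y hy hxy
    simpa [dif_pos (mem_coe.mp hx), dif_pos (mem_coe.mp hy)] using hxy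
  · intro x hx
    simp [dif_neg (mem_coe.not.mp hx)]

end

theorem ltimes_complete_graph_general {α : Type*} [DecidableEq α] (k r : ℕ)
    (hk : 2 ≤ k)
    (VG VH : Finset α) (EH : Finset (Finset α))
    (hH : IsHypergraph VH EH) (hbdd : ∀ e ∈ EH, e.card ≤ k)
    (hcard : VG.card = r)
    (hdisj : Disjoint VG VH) :
    (∀ e ∈ ltimesEdges VG (VG.powersetCard 2) EH, e.card ≤ k + 1) ∧
    MatchNumLE (ltimesEdges VG (VG.powersetCard 2) EH) r ∧
    (HColorable (ltimesEdges VG (VG.powersetCard 2) EH) r ↔ HColorable EH r) := by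
  refine ⟨card_le_of_mem_ltimesEdges (fun e he => ?_) hbdd, hcard ▸ ?_, ⟨?_, ?_⟩⟩
  · rw [(mem_powersetCard.mp he).2]; omega
  · refine matchNumLE_card_of_forall_inter_nonempty (inter_nonempty_of_mem_ltimesEdges ?_)
    intro e he
    obtain ⟨hsub, he2⟩ := mem_powersetCard.mp he
    rw [inter_eq_left.mpr hsub]
    exact card_pos.mp (by omega)
  · rintro ⟨c, hc⟩
    have hinj := isColoring_powersetCard_two_iff_injOn.mp (hc.mono subset_union_left)
    exact ⟨c, hc.of_ltimes (hinj.surjOn_of_card_eq (by simpa using hcard))⟩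
  · rintro ⟨c, hc⟩
    obtain ⟨c', hinj, hc'⟩ := exists_injOn_eqOn_compl c (V := VG) (by simp [hcard])
    have hH' : IsColoring EH c' := (isColoring_congr fun f hf v hv =>
      hc' fun hvG => disjoint_left.mp hdisj hvG ((hH f hf).1 hv)).mpr hc
    exact ⟨c', (isColoring_powersetCard_two_iff_injOn.mpr hinj).ltimes hH'⟩

/-- Let `H` be a `k`-bounded hypergraph and `G = K_r` the complete graph on `r`
vertices (as a 2-uniform hypergraph), with disjoint vertex sets. Then `G ⋉ H`
is `(k+1)`-bounded, `ν(G ⋉ H) ≤ r`, and `G ⋉ H` is `r`-colorable iff `H` is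
`r`-colorable. -/
theorem ltimes_complete_graph {α : Type*} [DecidableEq α] (k r : ℕ)
    (hk : 2 ≤ k) (hr : 2 ≤ r)
    (VG VH : Finset α) (EH : Finset (Finset α))
    (hH : IsHypergraph VH EH) (hbdd : ∀ e ∈ EH, e.card ≤ k)
    (hcard : VG.card = r)
    (hdisj : Disjoint VG VH) :
    (∀ e ∈ ltimesEdges VG (VG.powersetCard 2) EH, e.card ≤ k + 1) ∧
    MatchNumLE (ltimesEdges VG (VG.powersetCard 2) EH) r ∧
    (HColorable (ltimesEdges VG (VG.powersetCard 2) EH) r ↔ HColorable EH r) :=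
  ltimes_complete_graph_general k r hk VG VH EH hH hbdd hcard hdisj
end

section
/- For every positive integer s there exists a positive integer s' such that every linear 3-uniform hypergraph G containing no induced matching of size s satisfies ν(G) ≤ s'. -/
open Finset

/-- `M` is an induced matching of the hypergraph with edge set `E`: a matching
`M ⊆ E` such that the subhypergraph induced on the union of the edges of `M`
has no edges other than those of `M`. -/
def IsInducedMatching {α : Type*} [DecidableEq α] (E : Finset (Finset α))
    (M : Finset (Finset α)) : Prop :=
  M ⊆ E ∧ IsMatching M ∧ ∀ f ∈ E, f ⊆ M.biUnion id → f ∈ M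

/-!
Take `S ⊆ M` maximal such that no edge of `E` meets three members of `S`. In a linear 3-uniform
hypergraph an edge inside `⋃ S` but not in `S` would meet three members of `S`, so `S` is an
induced matching. By maximality every other `w ∈ M` meets an edge `f` that also meets two members
of `S`, in vertices `u ≠ v`; the pair `(u, v)` determines `f`, hence the third vertex of `f`, hence
`w`. So `|M \ S| ≤ |⋃ S|² ≤ 9|S|²`, and a matching with more than `s + 9s²` edges gives `|S| ≥ s`.
-/

section

variable {α : Type*} {E M S : Finset (Finset α)}

theorem IsMatching.eq_of_mem_of_mem (hM : IsMatching M) {a b : Finset α} (ha : a ∈ M) (hb : b ∈ M)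
    {y : α} (hya : y ∈ a) (hyb : y ∈ b) : a = b := by
  by_contra hab
  exact disjoint_left.mp (hM a ha b hb hab) hya hyb

theorem IsMatching.subset (hM : IsMatching M) (hSM : S ⊆ M) : IsMatching S :=
  fun e he f hf hef => hM e (hSM he) f (hSM hf) hef

variable [DecidableEq α]

def IsLinear (E : Finset (Finset α)) : Prop :=
  ∀ e ∈ E, ∀ f ∈ E, e ≠ f → #(e ∩ f) ≤ 1

theorem IsLinear.eq_of_mem_of_mem (hE : IsLinear E) {f g : Finset α} (hf : f ∈ E) (hg : g ∈ E)
    {u v : α} (huv : u ≠ v) (huf : u ∈ f) (hvf : v ∈ f) (hug : u ∈ g) (hvg : v ∈ g) : f = g := by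
  by_contra hfg
  have := hE f hf g hg hfg
  have : 1 < #(f ∩ g) :=
    one_lt_card.mpr ⟨u, mem_inter.mpr ⟨huf, hug⟩, v, mem_inter.mpr ⟨hvf, hvg⟩, huv⟩
  omega

theorem Finset.eq_of_card_eq_three {f : Finset α} (hf : #f = 3) {u v x y : α} (huv : u ≠ v)
    (hu : u ∈ f) (hv : v ∈ f) (hx : x ∈ f) (hy : y ∈ f)
    (hxu : x ≠ u) (hxv : x ≠ v) (hyu : y ≠ u) (hyv : y ≠ v) : x = y := by
  have : #((f.erase u).erase v) = 1 := by
    rw [card_erase_of_mem (mem_erase.mpr ⟨huv.symm, hv⟩), card_erase_of_mem hu, hf]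
  exact card_le_one.mp this.le x (by simp [*]) y (by simp [*])

theorem card_le_sq_of_forall_meets_third_vertex (hE : IsLinear E) (h3 : ∀ e ∈ E, #e = 3)
    (hM : IsMatching M) (U : Finset α)
    (hMU : ∀ w ∈ M, ∃ f ∈ E, ∃ u ∈ U, ∃ v ∈ U, u ≠ v ∧ u ∈ f ∧ v ∈ f ∧
      ∃ x ∈ f ∩ w, x ≠ u ∧ x ≠ v) :
    #M ≤ #U ^ 2 := by
  rw [sq, ← card_product]
  refine card_le_card_of_forall_subsingleton
    (fun w (p : α × α) => p.1 ≠ p.2 ∧ ∃ f ∈ E, p.1 ∈ f ∧ p.2 ∈ f ∧ ∃ x ∈ f ∩ w, x ≠ p.1 ∧ x ≠ p.2)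
    (fun w hw => ?_) ?_
  · obtain ⟨f, hf, u, hu, v, hv, huv, hfuv⟩ := hMU w hw
    exact ⟨(u, v), mem_product.mpr ⟨hu, hv⟩, huv, f, hf, hfuv⟩
  · rintro ⟨u, v⟩ - w ⟨hw, huv, f, hf, huf, hvf, x, hx, hxu, hxv⟩
      w' ⟨hw', -, f', hf', huf', hvf', x', hx', hx'u, hx'v⟩
    rw [mem_inter] at hx hx'
    obtain rfl : f = f' := hE.eq_of_mem_of_mem hf hf' huv huf hvf huf' hvf'
    obtain rfl : x = x' := eq_of_card_eq_three (h3 f hf) huv huf hvf hx.1 hx'.1 hxu hxv hx'u hx'v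
    exact hM.eq_of_mem_of_mem hw hw' hx.2 hx'.2

def NoEdgeMeetsThree (E S : Finset (Finset α)) : Prop :=
  ∀ f ∈ E, #{w ∈ S | (f ∩ w).Nonempty} < 3

theorem NoEdgeMeetsThree.mono {T : Finset (Finset α)} (hS : NoEdgeMeetsThree E S) (hTS : T ⊆ S) :
    NoEdgeMeetsThree E T :=
  fun f hf => (card_le_card (filter_subset_filter _ hTS)).trans_lt (hS f hf)

theorem NoEdgeMeetsThree.isInducedMatching (hE : IsLinear E) (h3 : ∀ e ∈ E, #e = 3)
    (hSE : S ⊆ E) (hS : IsMatching S) (hS3 : NoEdgeMeetsThree E S) : IsInducedMatching E S := by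
  refine ⟨hSE, hS, fun f hf hfS => ?_⟩
  by_contra hfS'
  have hf_le : #f ≤ #{w ∈ S | (f ∩ w).Nonempty} := by
    refine card_le_card_of_forall_subsingleton (fun v w => v ∈ w) (fun v hv => ?_) (fun w hw => ?_)
    · obtain ⟨w, hw, hvw⟩ := mem_biUnion.mp (hfS hv)
      exact ⟨w, mem_filter.mpr ⟨hw, v, mem_inter.mpr ⟨hv, hvw⟩⟩, hvw⟩
    · rintro u ⟨hu, huw⟩ v ⟨hv, hvw⟩
      by_contra huv
      have hwS := (mem_filter.mp hw).1
      exact hfS' (hE.eq_of_mem_of_mem hf (hSE hwS) huv hu hv huw hvw ▸ hwS)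
  have := hS3 f hf
  have := h3 f hf
  omega

theorem NoEdgeMeetsThree.exists_of_not_insert {w : Finset α} (hS : NoEdgeMeetsThree E S)
    (hw : ¬NoEdgeMeetsThree E (insert w S)) :
    ∃ f ∈ E, (f ∩ w).Nonempty ∧ ∃ w₁ ∈ S, ∃ w₂ ∈ S, w₁ ≠ w₂ ∧
      (f ∩ w₁).Nonempty ∧ (f ∩ w₂).Nonempty := by
  simp only [NoEdgeMeetsThree, not_forall, not_lt] at hw
  obtain ⟨f, hf, hf3⟩ := hw
  have hfS := hS f hf
  rw [filter_insert] at hf3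
  split_ifs at hf3 with hfw
  · have := card_insert_le w {w ∈ S | (f ∩ w).Nonempty}
    obtain ⟨w₁, h₁, w₂, h₂, hne⟩ := one_lt_card.mp (by omega : 1 < #{w ∈ S | (f ∩ w).Nonempty})
    rw [mem_filter] at h₁ h₂
    exact ⟨f, hf, hfw, w₁, h₁.1, w₂, h₂.1, hne, h₁.2, h₂.2⟩
  · omega

theorem NoEdgeMeetsThree.card_le_of_maximal (hE : IsLinear E) (h3 : ∀ e ∈ E, #e = 3)
    (hME : M ⊆ E) (hM : IsMatching M) (hSM : S ⊆ M) (hS : NoEdgeMeetsThree E S)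
    (hmax : ∀ w ∈ M \ S, ¬NoEdgeMeetsThree E (insert w S)) :
    #M ≤ #S + 9 * #S ^ 2 := by
  have hU : #(S.biUnion id) ≤ #S * 3 :=
    card_biUnion_le_card_mul S id 3 fun w hw => (h3 w (hME (hSM hw))).le
  have hMS : #(M \ S) ≤ #(S.biUnion id) ^ 2 := by
    refine card_le_sq_of_forall_meets_third_vertex hE h3 (hM.subset sdiff_subset) _ fun w hw => ?_
    obtain ⟨hwM, hwS⟩ := mem_sdiff.mp hw
    obtain ⟨f, hf, ⟨x, hx⟩, w₁, h₁, w₂, h₂, hne, ⟨u, hu⟩, ⟨v, hv⟩⟩ :=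
      hS.exists_of_not_insert (hmax w hw)
    rw [mem_inter] at hu hv
    refine ⟨f, hf, u, mem_biUnion.mpr ⟨w₁, h₁, hu.2⟩, v, mem_biUnion.mpr ⟨w₂, h₂, hv.2⟩,
      ?_, hu.1, hv.1, x, hx, ?_, ?_⟩
    · rintro rfl
      exact hne (hM.eq_of_mem_of_mem (hSM h₁) (hSM h₂) hu.2 hv.2)
    · rintro rfl
      exact hwS (hM.eq_of_mem_of_mem hwM (hSM h₁) (mem_inter.mp hx).2 hu.2 ▸ h₁)
    · rintro rfl
      exact hwS (hM.eq_of_mem_of_mem hwM (hSM h₂) (mem_inter.mp hx).2 hv.2 ▸ h₂)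
  calc #M = #(M \ S) + #S := (card_sdiff_add_card_eq_card hSM).symm
    _ ≤ (#S * 3) ^ 2 + #S := by gcongr; exact hMS.trans (Nat.pow_le_pow_left hU 2)
    _ = #S + 9 * #S ^ 2 := by ring

theorem exists_noEdgeMeetsThree_card_eq (hE : IsLinear E) (h3 : ∀ e ∈ E, #e = 3)
    (hME : M ⊆ E) (hM : IsMatching M) {s : ℕ} (hs : s + 9 * s ^ 2 ≤ #M) :
    ∃ S ⊆ M, #S = s ∧ NoEdgeMeetsThree E S := by
  classical
  obtain ⟨S, hS, hmax⟩ := exists_max_image {S ∈ M.powerset | NoEdgeMeetsThree E S} card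
    ⟨∅, mem_filter.mpr ⟨empty_mem_powerset M, fun f _ => by simp⟩⟩
  rw [mem_filter, mem_powerset] at hS
  have hM_le := hS.2.card_le_of_maximal hE h3 hME hM hS.1 fun w hw hins => by
    rw [mem_sdiff] at hw
    have := hmax (insert w S) (mem_filter.mpr ⟨mem_powerset.mpr (insert_subset hw.1 hS.1), hins⟩)
    rw [card_insert_of_notMem hw.2] at this
    omega
  have hs_le : s ≤ #S := by
    by_contra! h
    have : #S ^ 2 < s ^ 2 := Nat.pow_lt_pow_left h two_ne_zero
    omega
  obtain ⟨T, hTS, hT⟩ := exists_subset_card_eq hs_le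
  exact ⟨T, hTS.trans hS.1, hT, hS.2.mono hTS⟩

end

/-- For every `s ≥ 1` there is `s' ≥ 1` such that every linear 3-uniform
hypergraph with no induced matching of size `s` satisfies `ν(G) ≤ s'`. -/
theorem matching_bounded_of_no_induced_matching (s : ℕ) (hs : 0 < s) :
    ∃ s' : ℕ, 0 < s' ∧
      ∀ (α : Type) [DecidableEq α] (V : Finset α) (E : Finset (Finset α)),
        IsHypergraph V E → (∀ e ∈ E, e.card = 3) →
        (∀ e ∈ E, ∀ f ∈ E, e ≠ f → (e ∩ f).card ≤ 1) →
        (¬ ∃ M : Finset (Finset α), IsInducedMatching E M ∧ M.card = s) →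
        MatchNumLE E s' := by
  refine ⟨s + 9 * s ^ 2, Nat.add_pos_left hs _, fun α _ V E _ h3 hE hno M hME hM => ?_⟩
  by_contra! hM_large
  obtain ⟨S, hSM, hS, hS3⟩ := exists_noEdgeMeetsThree_card_eq hE h3 hME hM hM_large.le
  exact hno ⟨S, hS3.isInducedMatching hE h3 (hSM.trans hME) (hM.subset hSM), hS⟩
end
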